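/- arXiv:1910.08587 — 3 statements merged into one kernel-verified Lean document; each statement's English description precedes it below -/
import Mathlib

section
/- For any two bases B1, B2 of a matroid M and any element e ∈ B1, there exists f ∈ B2 such that both (B1 \ {e}) ∪ {f} and (B2 \ {f}) ∪ {e} are bases of M. -/
open Set

/-- **Symmetric exchange property.**  For any two bases `B₁, B₂` of a matroid `M` and any
element `e ∈ B₁`, there exists `f ∈ B₂` such that both `(B₁ \ {e}) ∪ {f}` and
`(B₂ \ {f}) ∪ {e}` are bases of `M`. -/
theorem symmetric_exchange {α : Type*} (M : Matroid α) (B₁ B₂ : Set α)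
    (hB₁ : M.IsBase B₁) (hB₂ : M.IsBase B₂) (e : α) (he : e ∈ B₁) :
    ∃ f ∈ B₂, M.IsBase (insert f (B₁ \ {e})) ∧ M.IsBase (insert e (B₂ \ {f})) := by
  by_cases heB₂ : e ∈ B₂
  · exact ⟨e, heB₂, by rwa [insert_diff_singleton, insert_eq_of_mem he],
      by rwa [insert_diff_singleton, insert_eq_of_mem heB₂]⟩
  have heE : e ∈ M.E := hB₁.subset_ground he
  set S : Set α := {f ∈ B₂ | e ∉ M.closure (B₂ \ {f})} with hSdef
  have hSB₂ : S ⊆ B₂ := fun x hx ↦ hx.1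
  -- key claim: `e ∈ M.closure S`
  have hScl : e ∈ M.closure S := by
    by_cases hT : (B₂ \ S).Nonempty
    · have hJs := hB₂.indep.closure_sInter_eq_biInter_closure_of_forall_subset
        (Js := (fun f ↦ B₂ \ {f}) '' (B₂ \ S)) (hT.image _)
        (by rintro J ⟨f, -, rfl⟩; exact diff_subset)
      have hint : ⋂₀ ((fun f ↦ B₂ \ {f}) '' (B₂ \ S)) = S := by
        ext x
        simp only [sInter_image, mem_iInter, mem_diff, mem_singleton_iff]
        constructor
        · intro h
          obtain ⟨x₀, hx₀⟩ := hT
          have hxB₂ : x ∈ B₂ := (h x₀ hx₀).1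
          refine ⟨hxB₂, fun hxcl ↦ ?_⟩
          exact (h x ⟨hxB₂, fun hxS ↦ hxS.2 hxcl⟩).2 rfl
        · rintro hxS f ⟨hfB₂, hfS⟩
          exact ⟨hxS.1, fun hxf ↦ hfS (hxf ▸ hxS)⟩
      rw [hint] at hJs
      rw [hJs, mem_iInter₂]
      rintro J ⟨f, hf, rfl⟩
      exact not_not.mp fun h ↦ hf.2 ⟨hf.1, h⟩
    · have : S = B₂ := hSB₂.antisymm (fun x hx ↦ by
        by_contra hxS; exact hT ⟨x, hx, hxS⟩)
      rw [this, hB₂.closure_eq]; exact heE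
  -- `e ∉ M.closure (B₁ \ {e})`, so some `f ∈ S` escapes that closure
  have hecl : e ∉ M.closure (B₁ \ {e}) := hB₁.indep.notMem_closure_diff_of_mem he
  have hnS : ¬ S ⊆ M.closure (B₁ \ {e}) := fun hsub ↦ hecl
    (by simpa using (M.closure_subset_closure_of_subset_closure hsub) hScl)
  obtain ⟨f, hfS, hfcl⟩ := not_subset.mp hnS
  have hfB₂ : f ∈ B₂ := hfS.1
  have hfE : f ∈ M.E := hB₂.subset_ground hfB₂
  have hfe : f ≠ e := fun h ↦ heB₂ (h ▸ hfB₂)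
  have hfB₁ : f ∉ B₁ := fun h ↦ hfcl (M.subset_closure (B₁ \ {e})
    (diff_subset.trans hB₁.subset_ground) ⟨h, hfe⟩)
  refine ⟨f, hfB₂, ?_, ?_⟩
  · refine hB₁.exchange_isBase_of_indep hfB₁ ?_
    rw [(hB₁.indep.diff {e}).insert_indep_iff_of_notMem (fun h ↦ hfB₁ h.1)]
    exact ⟨hfE, hfcl⟩
  · refine hB₂.exchange_isBase_of_indep heB₂ ?_
    rw [(hB₂.indep.diff {f}).insert_indep_iff_of_notMem (fun h ↦ heB₂ h.1)]
    exact ⟨heE, hfS.2⟩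
end

section
/- Let (G, 𝒞) be a linear biased graph, let T be a spanning tree of G, and let P1, P2 be two internally vertex-disjoint (u,v)-paths with E(P1) ⊆ E(T) and E(P2) ∩ E(T) = ∅. If for each edge e ∈ E(P2) the fundamental cycle C(e,T) is balanced, then the cycle P1 ∪ P2 is balanced. -/
open Finset
open scoped symmDiff Classical

/-- A multigraph: each edge carries an unordered pair of endpoints. -/
structure Multigraph (V : Type*) (E : Type*) where
  ends : E → Sym2 V

namespace Multigraph

variable {V E : Type*} (G : Multigraph V E)

/-- Edge `e` is incident with vertex `w`. -/
def Inc (e : E) (w : V) : Prop := w ∈ G.ends e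

/-- `e` is a loop. -/
def IsLoopEdge (e : E) : Prop := (G.ends e).IsDiag

/-- Multiplicity of a vertex in an edge: `2` for a loop at the vertex, `1` if incident,
`0` otherwise. -/
noncomputable def mult (e : E) (w : V) : ℕ :=
  if G.ends e = Sym2.diag w then 2 else if w ∈ G.ends e then 1 else 0

/-- Degree of `w` with respect to the edge set `A` (loops counted twice). -/
noncomputable def deg (A : Finset E) (w : V) : ℕ := ∑ e ∈ A, G.mult e w

/-- Two edges of `A` sharing a vertex. -/
def AdjIn (A : Finset E) (e f : E) : Prop :=
  e ∈ A ∧ f ∈ A ∧ ∃ w, G.Inc e w ∧ G.Inc f w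

/-- The edge set `A` induces a connected subgraph. -/
def EdgeConnected (A : Finset E) : Prop :=
  ∀ e ∈ A, ∀ f ∈ A, Relation.ReflTransGen (G.AdjIn A) e f

/-- `A` is the edge set of a cycle: nonempty, connected, and every vertex has degree
`0` or `2` in `A`. -/
def IsCycle (A : Finset E) : Prop :=
  A.Nonempty ∧ G.EdgeConnected A ∧ ∀ w, G.deg A w = 0 ∨ G.deg A w = 2

/-- The set of vertices met by the edge set `A`. -/
def Supp (A : Finset E) : Set V := { w | ∃ e ∈ A, G.Inc e w }

/-- `A` is the edge set of a path from `u` to `w`. -/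
def IsPath (A : Finset E) (u w : V) : Prop :=
  u ≠ w ∧ G.EdgeConnected A ∧ G.deg A u = 1 ∧ G.deg A w = 1 ∧
    ∀ x, x ≠ u → x ≠ w → (G.deg A x = 0 ∨ G.deg A x = 2)

/-- Vertices joined by a walk using edges of `A`. -/
def Reach (A : Finset E) (a b : V) : Prop :=
  Relation.ReflTransGen (fun x y => ∃ e ∈ A, G.Inc e x ∧ G.Inc e y) a b

/-- `T` is a spanning tree: every pair of vertices is joined by `T` and `T` contains
no cycle. -/
def IsSpanningTree (T : Finset E) : Prop :=
  (∀ a b : V, G.Reach T a b) ∧ ∀ C ⊆ T, ¬ G.IsCycle C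

/-- `C` is the fundamental cycle of the edge `e` with respect to the spanning tree `T`. -/
def IsFundCycle (T : Finset E) (e : E) (C : Finset E) : Prop :=
  G.IsCycle C ∧ e ∈ C ∧ C ⊆ insert e T

end Multigraph

/-- Symmetric difference of a list of finsets. -/
def listSymmDiff {E : Type*} [DecidableEq E] (L : List (Finset E)) : Finset E :=
  L.foldr (· ∆ ·) ∅

/-- A linear biased graph: a multigraph together with a class `Bal` of *balanced* cycles
satisfying the theta property and closed under taking cycles that are symmetric
differences of balanced cycles. -/
structure LinearBiasedGraph (V E : Type*) [DecidableEq E] where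
  G : Multigraph V E
  Bal : Set (Finset E)
  bal_cycle : ∀ C ∈ Bal, G.IsCycle C
  theta : ∀ C₁ C₂ C₃ : Finset E, G.IsCycle C₁ → G.IsCycle C₂ → G.IsCycle C₃ →
    C₃ = C₁ ∆ C₂ → C₁ ∈ Bal → C₂ ∈ Bal → C₃ ∈ Bal
  linear : ∀ L : List (Finset E), (∀ D ∈ L, D ∈ Bal) →
    ∀ C : Finset E, G.IsCycle C → C = listSymmDiff L → C ∈ Bal

namespace LinearBiasedGraph

variable {V E : Type*} [DecidableEq E] (Ω : LinearBiasedGraph V E)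

/-- Independent sets of the frame matroid `M(Ω)`: edge sets containing no balanced cycle
and no two distinct cycles lying in a common component. -/
def FrameIndep (A : Finset E) : Prop :=
  (∀ C ⊆ A, Ω.G.IsCycle C → C ∉ Ω.Bal) ∧
  ∀ C₁ C₂ : Finset E, C₁ ⊆ A → C₂ ⊆ A → Ω.G.IsCycle C₁ → Ω.G.IsCycle C₂ → C₁ ≠ C₂ →
    ∀ e₁ ∈ C₁, ∀ e₂ ∈ C₂, ¬ Relation.ReflTransGen (Ω.G.AdjIn A) e₁ e₂

/-- Bases of the frame matroid `M(Ω)`: maximal independent sets. -/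
def FrameBase (B : Finset E) : Prop :=
  Ω.FrameIndep B ∧ ∀ A : Finset E, Ω.FrameIndep A → B ⊆ A → A = B

/-- Circuits of the frame matroid `M(Ω)`: minimal dependent sets. -/
def FrameCircuit (C : Finset E) : Prop :=
  ¬ Ω.FrameIndep C ∧ ∀ C' ⊂ C, Ω.FrameIndep C'

variable {κ : ℕ}

/-- A single symmetric exchange between two members of a sequence of bases. -/
def SymExchStep (𝓑 𝓑' : Fin κ → Finset E) : Prop :=
  ∃ i j : Fin κ, i ≠ j ∧ ∃ e ∈ 𝓑 i, ∃ f ∈ 𝓑 j,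
    Ω.FrameBase (insert f (𝓑 i \ {e})) ∧ Ω.FrameBase (insert e (𝓑 j \ {f})) ∧
    𝓑' i = insert f (𝓑 i \ {e}) ∧ 𝓑' j = insert e (𝓑 j \ {f}) ∧
    ∀ t : Fin κ, t ≠ i → t ≠ j → 𝓑' t = 𝓑 t

/-- `𝓑'` is obtained from `𝓑` by a finite sequence of symmetric exchanges. -/
def ExchReachable (𝓑 𝓑' : Fin κ → Finset E) : Prop :=
  Relation.ReflTransGen Ω.SymExchStep 𝓑 𝓑'

end LinearBiasedGraph

namespace Multigraph

set_option linter.unusedSectionVars false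

variable {V E : Type*} [DecidableEq E] {G : Multigraph V E}

lemma exists_ends {e : E} : ∃ x y, G.ends e = s(x, y) := by
  obtain ⟨⟨p, q⟩, h⟩ := Quot.exists_rep (G.ends e)
  exact ⟨p, q, h.symm⟩

lemma ends_eq_pair {e : E} {x y : V} (hx : G.Inc e x) (hy : G.Inc e y) (hxy : x ≠ y) :
    G.ends e = s(x, y) := by
  obtain ⟨p, q, h⟩ := exists_ends (G := G) (e := e)
  rw [Inc, h, Sym2.mem_iff] at hx hy
  rw [h, Sym2.eq_iff]
  rcases hx with rfl | rfl <;> rcases hy with rfl | rfl <;> tauto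

lemma mult_eq_zero {e : E} {z : V} (h : ¬ G.Inc e z) : G.mult e z = 0 := by
  have hd : ¬ G.ends e = Sym2.diag z := by
    intro hd
    exact h (by rw [Inc, hd]; exact Sym2.mem_mk_left z z)
  rw [mult, if_neg hd, if_neg (show ¬ z ∈ G.ends e from h)]

lemma mult_of_ends {e : E} {x y z : V} (h : G.ends e = s(x, y)) (hxy : x ≠ y) :
    G.mult e z = if z = x then 1 else if z = y then 1 else 0 := by
  have hd : ¬ G.ends e = Sym2.diag z := by
    rw [h, Sym2.diag, Sym2.eq_iff]; rintro (⟨rfl, rfl⟩ | ⟨rfl, rfl⟩) <;> exact hxy rfl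
  rw [mult, if_neg hd]
  simp only [h, Sym2.mem_iff]
  split_ifs <;> tauto

lemma deg_insert {A : Finset E} {e : E} (he : e ∉ A) (z : V) :
    G.deg (insert e A) z = G.mult e z + G.deg A z := Finset.sum_insert he

lemma deg_singleton (e : E) (z : V) : G.deg {e} z = G.mult e z := Finset.sum_singleton _ _

lemma deg_union {A B : Finset E} (h : Disjoint A B) (z : V) :
    G.deg (A ∪ B) z = G.deg A z + G.deg B z := Finset.sum_union h

lemma exists_inc_of_deg_pos {A : Finset E} {z : V} (h : 0 < G.deg A z) :
    ∃ e ∈ A, G.Inc e z := by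
  by_contra hc
  push_neg at hc
  have : G.deg A z = 0 := Finset.sum_eq_zero fun e he => mult_eq_zero (hc e he)
  omega

/-- Degree mod 2. -/
noncomputable def dZ (G : Multigraph V E) (A : Finset E) (z : V) : ZMod 2 := (G.deg A z : ZMod 2)

lemma dZ_symmDiff (A B : Finset E) (z : V) :
    G.dZ (A ∆ B) z = G.dZ A z + G.dZ B z := by
  have h1 : G.deg (A ∪ B) z + G.deg (A ∩ B) z = G.deg A z + G.deg B z :=
    Finset.sum_union_inter
  have h2 : G.deg (A ∪ B) z = G.deg (A ∆ B) z + G.deg (A ∩ B) z := by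
    rw [← deg_union (Finset.disjoint_left.2 (by
      intro a ha hb
      rw [Finset.mem_symmDiff] at ha
      simp only [Finset.mem_inter] at hb
      tauto))]
    congr 1
    ext a
    simp only [Finset.mem_union, Finset.mem_symmDiff, Finset.mem_inter]
    tauto
  unfold dZ
  have : G.deg (A ∆ B) z + 2 * G.deg (A ∩ B) z = G.deg A z + G.deg B z := by omega
  calc (G.deg (A ∆ B) z : ZMod 2) = (G.deg (A ∆ B) z : ZMod 2) + 2 * (G.deg (A ∩ B) z) := by
        rw [show ((2 : ZMod 2) = 0) from rfl]; ring
    _ = ((G.deg (A ∆ B) z + 2 * G.deg (A ∩ B) z : ℕ) : ZMod 2) := by push_cast; ring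
    _ = _ := by rw [this]; push_cast; ring

lemma mult_parity {e : E} {x y : V} (h : G.ends e = s(x, y)) (z : V) :
    (G.mult e z : ZMod 2) = (if z = x then 1 else 0) + (if z = y then 1 else 0) := by
  by_cases hxy : x = y
  · subst hxy
    have hd : G.ends e = Sym2.diag x := by rw [h]; rfl
    rw [mult]
    by_cases hz : z = x
    · subst hz
      rw [if_pos hd]
      norm_num
    · have h2 : ¬ G.ends e = Sym2.diag z := by
        rw [hd]; intro hc
        rw [Sym2.diag, Sym2.diag, Sym2.eq_iff] at hc
        tauto
      have hz2 : ¬ z ∈ G.ends e := by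
        rw [h, Sym2.mem_iff]; tauto
      rw [if_neg h2, if_neg hz2]
      simp [hz]
  · rw [mult_of_ends h hxy]
    split_ifs with h1 h2 <;> simp_all

lemma dZ_eq_zero_of_even {A : Finset E} {z : V} (h : Even (G.deg A z)) : G.dZ A z = 0 := by
  obtain ⟨k, hk⟩ := h
  unfold dZ
  rw [hk]
  push_cast
  have : ((k : ZMod 2) + k) = 2 * k := by ring
  rw [this, show ((2:ZMod 2) = 0) from rfl]
  ring

lemma even_of_dZ_eq_zero {A : Finset E} {z : V} (h : G.dZ A z = 0) : Even (G.deg A z) := by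
  unfold dZ at h
  rw [ZMod.natCast_eq_zero_iff] at h
  exact even_iff_two_dvd.2 h

lemma dZ_of_cycle {C : Finset E} (h : G.IsCycle C) (z : V) : G.dZ C z = 0 :=
  dZ_eq_zero_of_even (by rcases h.2.2 z with h' | h' <;> rw [h'] <;> simp)

end Multigraph

section ListSD

variable {E : Type*} [DecidableEq E]

lemma listSymmDiff_nil : listSymmDiff ([] : List (Finset E)) = ∅ := rfl

lemma listSymmDiff_cons (C : Finset E) (L : List (Finset E)) :
    listSymmDiff (C :: L) = C ∆ listSymmDiff L := rfl

lemma mem_listSymmDiff {f : E} {L : List (Finset E)} :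
    f ∈ listSymmDiff L ↔ Odd (L.countP (fun C => f ∈ C)) := by
  induction L with
  | nil => simp [listSymmDiff]
  | cons C L ih =>
    rw [listSymmDiff_cons, Finset.mem_symmDiff, List.countP_cons]
    by_cases h : f ∈ C <;>
      simp [h, ih, Nat.odd_add_one, Nat.not_odd_iff_even, Nat.not_even_iff_odd]

lemma listSymmDiff_map_singleton_subset (es : List E) :
    listSymmDiff (es.map ({·})) ⊆ es.toFinset := by
  induction es with
  | nil => simp [listSymmDiff]
  | cons e es ih =>
    rw [List.map_cons, listSymmDiff_cons, List.toFinset_cons]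
    intro a ha
    rw [Finset.mem_symmDiff] at ha
    rcases ha with ⟨h1, _⟩ | ⟨h1, _⟩
    · simp only [Finset.mem_singleton] at h1
      rw [h1]
      exact Finset.mem_insert_self _ _
    · exact Finset.mem_insert_of_mem (ih h1)

end ListSD

namespace Multigraph

set_option linter.unusedSectionVars false

variable {V E : Type*} [DecidableEq E] {G : Multigraph V E} {A B : Finset E}

lemma dZ_empty (z : V) : G.dZ (∅ : Finset E) z = 0 := by
  unfold dZ deg
  simp

lemma dZ_listSymmDiff (L : List (Finset E)) (z : V) :
    G.dZ (listSymmDiff L) z = (L.map (fun C => G.dZ C z)).sum := by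
  induction L with
  | nil => simpa [listSymmDiff] using dZ_empty z
  | cons C L ih => rw [listSymmDiff_cons, dZ_symmDiff, ih, List.map_cons, List.sum_cons]

lemma inc_left {e : E} {x y : V} (h : G.ends e = s(x, y)) : G.Inc e x := by
  rw [Inc, h]; exact Sym2.mem_mk_left x y

lemma inc_right {e : E} {x y : V} (h : G.ends e = s(x, y)) : G.Inc e y := by
  rw [Inc, h]; exact Sym2.mem_mk_right x y

lemma inc_elim {e : E} {x y z : V} (h : G.ends e = s(x, y)) (hz : G.Inc e z) :
    z = x ∨ z = y := by
  rw [Inc, h, Sym2.mem_iff] at hz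
  exact hz

/-- Walks in a multigraph along edges of `A`, recorded by vertex and edge lists. -/
inductive Walk (G : Multigraph V E) (A : Finset E) : List V → List E → Prop
  | nil (v : V) : Walk G A [v] []
  | cons {x y : V} {vs : List V} {es : List E} (e : E) (he : e ∈ A)
      (hends : G.ends e = s(x, y)) (hw : Walk G A (y :: vs) es) :
      Walk G A (x :: y :: vs) (e :: es)

lemma Walk.edges_subset {vs es} (hw : G.Walk A vs es) : ∀ e ∈ es, e ∈ A := by
  induction hw with
  | nil => simp
  | cons e he hends hw ih =>
    intro f hf
    rcases List.mem_cons.1 hf with rfl | hf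
    · exact he
    · exact ih f hf

lemma Walk.vertex_mem {vs es} (hw : G.Walk A vs es) :
    ∀ e ∈ es, ∀ z, G.Inc e z → z ∈ vs := by
  induction hw with
  | nil => simp
  | cons e he hends hw ih =>
    intro f hf z hz
    rcases List.mem_cons.1 hf with rfl | hf
    · rcases inc_elim hends hz with rfl | rfl
      · exact List.mem_cons_self
      · exact List.mem_cons_of_mem _ (List.mem_cons_self)
    · exact List.mem_cons_of_mem _ (ih f hf z hz)

lemma reach_to_walk {a b : V} (h : G.Reach A a b) :
    ∃ vs es, G.Walk A vs es ∧ vs.head? = some a ∧ vs.getLast? = some b := by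
  induction h using Relation.ReflTransGen.head_induction_on with
  | refl => exact ⟨[b], [], Walk.nil b, rfl, rfl⟩
  | head hstep _ ih =>
    rename_i a c _
    obtain ⟨e, he, hea, hec⟩ := hstep
    obtain ⟨vs, es, hw, hh, hl⟩ := ih
    by_cases hac : a = c
    · exact ⟨vs, es, hw, by rw [hh, hac], hl⟩
    · obtain ⟨vs', rfl⟩ : ∃ vs', vs = c :: vs' := by
        cases vs with
        | nil => simp at hh
        | cons v vs' =>
          simp only [List.head?_cons, Option.some_inj] at hh
          exact ⟨vs', by rw [hh]⟩
      exact ⟨a :: c :: vs', e :: es, Walk.cons e he (ends_eq_pair hea hec hac) hw, rfl,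
        by rw [List.getLast?_cons_cons]; exact hl⟩

lemma walk_parity {vs es} (hw : G.Walk A vs es) {a b : V}
    (ha : vs.head? = some a) (hb : vs.getLast? = some b) (z : V) :
    G.dZ (listSymmDiff (es.map ({·}))) z =
      (if z = a then 1 else 0) + (if z = b then 1 else 0) := by
  induction hw generalizing a b with
  | nil v =>
    simp only [List.head?_cons, Option.some_inj] at ha
    simp only [List.getLast?_singleton, Option.some_inj] at hb
    subst ha; subst hb
    rw [List.map_nil, listSymmDiff_nil, dZ_empty]
    split_ifs <;> first | rfl | decide
  | cons e he hends hw ih =>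
    rename_i x y vs' es'
    simp only [List.head?_cons, Option.some_inj] at ha
    subst ha
    rw [List.getLast?_cons_cons] at hb
    have ihy := ih (a := y) (b := b) (List.head?_cons) hb
    rw [List.map_cons, listSymmDiff_cons, dZ_symmDiff, ihy]
    have h1 : G.dZ {e} z = (if z = x then 1 else 0) + (if z = y then 1 else 0) := by
      unfold dZ
      rw [deg_singleton]
      exact mult_parity hends z
    rw [h1]
    split_ifs <;> decide

end Multigraph

namespace Multigraph

set_option linter.unusedSectionVars false

variable {V E : Type*} [DecidableEq E] {G : Multigraph V E} {A B : Finset E}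

lemma walk_cons_inc {y : V} {tl : List V} {e' : E} {es' : List E}
    (hw : G.Walk A (y :: tl) (e' :: es')) : G.Inc e' y := by
  cases hw with
  | cons e he hends hw => exact inc_left hends

lemma Walk.edges_nodup {vs es} (hw : G.Walk A vs es) (hnd : vs.Nodup) : es.Nodup := by
  induction hw with
  | nil => exact List.nodup_nil
  | cons e he hends hw ih =>
    rename_i x y vs' es'
    have hx : x ∉ y :: vs' := (List.nodup_cons.1 hnd).1
    refine List.nodup_cons.2 ⟨?_, ih (List.nodup_cons.1 hnd).2⟩
    intro hmem
    exact hx (hw.vertex_mem e hmem x (inc_left hends))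

lemma Walk.prefix_to {vs es} (hw : G.Walk A vs es) {x : V} (hx : x ∈ vs) :
    ∃ vs' es', vs' <+: vs ∧ es' <+: es ∧ G.Walk A vs' es' ∧
      vs'.head? = vs.head? ∧ vs'.getLast? = some x := by
  induction hw with
  | nil v =>
    rw [List.mem_singleton] at hx
    subst hx
    exact ⟨[x], [], List.prefix_refl _, List.prefix_refl _, Walk.nil x, rfl, rfl⟩
  | cons e he hends hw ih =>
    rename_i x₀ y vs₀ es₀
    rcases List.mem_cons.1 hx with rfl | hx'
    · exact ⟨[x], [], ⟨_, rfl⟩, List.nil_prefix, Walk.nil x, rfl, rfl⟩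
    · obtain ⟨vs', es', hp, hep, hw', hh, hl⟩ := ih hx'
      obtain ⟨vs'', rfl⟩ : ∃ vs'', vs' = y :: vs'' := by
        cases vs' with
        | nil => simp at hh
        | cons v t =>
          simp only [List.head?_cons, Option.some_inj] at hh
          exact ⟨t, by rw [hh]⟩
      obtain ⟨t, ht⟩ := hp
      obtain ⟨t2, ht2⟩ := hep
      refine ⟨x₀ :: y :: vs'', e :: es', ⟨t, by rw [List.cons_append, ht]⟩,
        ⟨t2, by rw [List.cons_append, ht2]⟩, Walk.cons e he hends hw', rfl, ?_⟩
      rw [List.getLast?_cons_cons]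
      exact hl

lemma Walk.deg_toFinset {vs es} (hw : G.Walk A vs es) (hnd : vs.Nodup) (hne : es ≠ [])
    (z : V) :
    G.deg es.toFinset z =
      (if vs.head? = some z then 1 else 0) + (if vs.getLast? = some z then 1 else 0) +
        (if z ∈ vs.dropLast.drop 1 then 2 else 0) := by
  induction hw with
  | nil => exact absurd rfl hne
  | cons e he hends hw ih =>
    rename_i x y vs₀ es₀
    have hxvs : x ∉ y :: vs₀ := (List.nodup_cons.1 hnd).1
    have hxy : x ≠ y := fun h => hxvs (h ▸ List.mem_cons_self)
    have hxvs0 : x ∉ vs₀ := fun h => hxvs (List.mem_cons_of_mem _ h)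
    have hnd' : (y :: vs₀).Nodup := (List.nodup_cons.1 hnd).2
    have hyvs0 : y ∉ vs₀ := (List.nodup_cons.1 hnd').1
    cases es₀ with
    | nil =>
      obtain rfl : vs₀ = [] := by cases hw; rfl
      have h1 : G.deg (List.toFinset [e]) z = G.mult e z := by
        rw [List.toFinset_cons, List.toFinset_nil]
        exact deg_singleton e z
      rw [h1, mult_of_ends hends hxy]
      have hh : ([x, y].head? = some z) ↔ (x = z) := by simp
      have hl : ([x, y].getLast? = some z) ↔ (y = z) := by simp
      have hi : ¬ (z ∈ [x, y].dropLast.drop 1) := by simp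
      simp only [hh, hl, if_neg hi]
      by_cases hzx : z = x
      · rw [if_pos hzx, if_pos hzx.symm,
          if_neg (fun h : y = z => hxy (h.trans hzx).symm)]
      · rw [if_neg hzx, if_neg (fun h : x = z => hzx h.symm)]
        by_cases hzy : z = y
        · rw [if_pos hzy, if_pos hzy.symm]
        · rw [if_neg hzy, if_neg (fun h : y = z => hzy h.symm)]
    | cons e₁ es₁ =>
      obtain ⟨y₁, vs₁, rfl⟩ : ∃ y₁ vs₁, vs₀ = y₁ :: vs₁ := by
        cases hw
        exact ⟨_, _, rfl⟩
      have henotin : e ∉ e₁ :: es₁ := fun hmem =>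
        hxvs (hw.vertex_mem e hmem x (inc_left hends))
      have hdeg : G.deg (List.toFinset (e :: e₁ :: es₁)) z
          = G.mult e z + G.deg (List.toFinset (e₁ :: es₁)) z := by
        rw [List.toFinset_cons]
        exact deg_insert (by simpa using henotin) z
      rw [hdeg, ih hnd' (by simp), mult_of_ends hends hxy]
      have hInew : (x :: y :: y₁ :: vs₁).dropLast.drop 1 = y :: (y₁ :: vs₁).dropLast := by
        simp [List.dropLast_cons₂]
      have hIold : (y :: y₁ :: vs₁).dropLast.drop 1 = (y₁ :: vs₁).dropLast := by
        simp [List.dropLast_cons₂]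
      have hlasteq : (x :: y :: y₁ :: vs₁).getLast? = (y :: y₁ :: vs₁).getLast? :=
        List.getLast?_cons_cons ..
      set lst := (y₁ :: vs₁).getLast (List.cons_ne_nil _ _) with hlstdef
      have hlst : (y :: y₁ :: vs₁).getLast? = some lst := by
        rw [List.getLast?_cons_cons]
        exact List.getLast?_eq_getLast_of_ne_nil _
      have hlstmem : lst ∈ y₁ :: vs₁ := List.getLast_mem _
      have hIsub : ∀ a, a ∈ (y₁ :: vs₁).dropLast → a ∈ y₁ :: vs₁ := fun a ha =>
        (List.dropLast_sublist _).mem ha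
      have hyI : y ∉ (y₁ :: vs₁).dropLast := fun h => hyvs0 (hIsub _ h)
      have hxI : x ∉ (y₁ :: vs₁).dropLast := fun h => hxvs0 (hIsub _ h)
      have hlx : lst ≠ x := fun h => hxvs0 (h ▸ hlstmem)
      have hly : lst ≠ y := fun h => hyvs0 (h ▸ hlstmem)
      rw [hInew, hIold, hlasteq, hlst]
      simp only [List.head?_cons, Option.some_inj, List.mem_cons]
      by_cases hzx : z = x
      · have hzy : ¬ z = y := fun h => hxy ((hzx.symm.trans h))
        have hzi : ¬ z ∈ (y₁ :: vs₁).dropLast := fun h => hxI (hzx ▸ h)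
        rw [if_pos hzx, if_neg (fun h : y = z => hzy h.symm),
          if_neg (fun h : lst = z => hlx (h.trans hzx)), if_neg hzi,
          if_pos hzx.symm, if_neg (show ¬ (z = y ∨ z ∈ (y₁ :: vs₁).dropLast) by tauto)]
      · by_cases hzy : z = y
        · have hzi : ¬ z ∈ (y₁ :: vs₁).dropLast := fun h => hyI (hzy ▸ h)
          rw [if_neg hzx, if_pos hzy, if_pos hzy.symm,
            if_neg (fun h : lst = z => hly (h.trans hzy)), if_neg hzi,
            if_neg (fun h : x = z => hzx h.symm), if_pos (Or.inl hzy)]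
        · rw [if_neg hzx, if_neg hzy, if_neg (fun h : y = z => hzy h.symm),
            if_neg (fun h : x = z => hzx h.symm)]
          by_cases hzi : z ∈ (y₁ :: vs₁).dropLast
          · rw [if_pos hzi, if_pos (Or.inr hzi)]
            ring
          · rw [if_neg hzi,
              if_neg (show ¬ (z = y ∨ z ∈ (y₁ :: vs₁).dropLast) by tauto)]
            ring

lemma adjIn_mono (h : A ⊆ B) {e f : E} (hadj : G.AdjIn A e f) : G.AdjIn B e f :=
  ⟨h hadj.1, h hadj.2.1, hadj.2.2⟩

lemma reflTransGen_adjIn_mono (h : A ⊆ B) {e f : E}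
    (hr : Relation.ReflTransGen (G.AdjIn A) e f) :
    Relation.ReflTransGen (G.AdjIn B) e f :=
  Relation.ReflTransGen.mono (fun _ _ => adjIn_mono h) _ _ hr

lemma adjIn_symm {e f : E} (h : G.AdjIn A e f) : G.AdjIn A f e :=
  ⟨h.2.1, h.1, h.2.2.imp fun _ hw => ⟨hw.2, hw.1⟩⟩

lemma reflTransGen_adjIn_symm {e f : E} (h : Relation.ReflTransGen (G.AdjIn A) e f) :
    Relation.ReflTransGen (G.AdjIn A) f e :=
  by
  induction h with
  | refl => exact Relation.ReflTransGen.refl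
  | tail _ hbc ih => exact Relation.ReflTransGen.head (adjIn_symm hbc) ih

lemma Walk.conn {vs es} (hw : G.Walk A vs es) :
    ∀ f ∈ es, ∀ g ∈ es, Relation.ReflTransGen (G.AdjIn es.toFinset) f g := by
  induction hw with
  | nil => simp
  | cons e he hends hw ih =>
    rename_i x y vs₀ es₀
    have hsub : es₀.toFinset ⊆ (e :: es₀).toFinset := by
      intro a ha
      rw [List.toFinset_cons]
      exact Finset.mem_insert_of_mem ha
    have key : ∀ g ∈ es₀, Relation.ReflTransGen (G.AdjIn (e :: es₀).toFinset) e g := by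
      intro g hg
      cases es₀ with
      | nil => simp at hg
      | cons e₁ es₁ =>
        have hadj : G.AdjIn (e :: e₁ :: es₁).toFinset e e₁ := by
          refine ⟨by simp, by simp, y, inc_right hends, walk_cons_inc hw⟩
        exact Relation.ReflTransGen.head hadj
          (reflTransGen_adjIn_mono hsub (ih e₁ (List.mem_cons_self) g hg))
    intro f hf g hg
    rcases List.mem_cons.1 hf with rfl | hf' <;> rcases List.mem_cons.1 hg with rfl | hg'
    · exact Relation.ReflTransGen.refl
    · exact key g hg'
    · exact reflTransGen_adjIn_symm (key f hf')
    · exact reflTransGen_adjIn_mono hsub (ih f hf' g hg')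

end Multigraph

lemma List.getLast_not_mem_dropLast {α : Type*} {l : List α} (hnd : l.Nodup) (h : l ≠ []) :
    l.getLast h ∉ l.dropLast := by
  intro hmem
  have heq : l.dropLast ++ [l.getLast h] = l := List.dropLast_append_getLast h
  rw [← heq] at hnd
  rcases List.nodup_append.1 hnd with ⟨_, _, hdisj⟩
  exact hdisj _ hmem _ (List.mem_singleton_self _) rfl

namespace Multigraph

set_option linter.unusedSectionVars false

variable {V E : Type*} [DecidableEq E] {G : Multigraph V E} {A B : Finset E}

lemma isCycle_singleton_loop {e : E} (hl : G.IsLoopEdge e) : G.IsCycle {e} := by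
  obtain ⟨x, y, hxy⟩ := exists_ends (G := G) (e := e)
  obtain rfl : x = y := by rw [IsLoopEdge, hxy] at hl; exact Sym2.mk_isDiag_iff.1 hl
  refine ⟨Finset.singleton_nonempty e, ?_, ?_⟩
  · intro a ha b hb
    rw [Finset.mem_singleton] at ha hb
    subst ha; subst hb
    exact Relation.ReflTransGen.refl
  · intro z
    rw [deg_singleton]
    by_cases hz : z = x
    · subst hz
      right
      rw [mult, if_pos (by rw [hxy]; rfl)]
    · left
      exact mult_eq_zero (fun hc => hz (by rcases inc_elim hxy hc with h | h <;> exact h))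

lemma inc_exists_pair {f : E} {x : V} (hfx : G.Inc f x) : ∃ x2, G.ends f = s(x, x2) := by
  obtain ⟨p, q, hpq⟩ := exists_ends (G := G) (e := f)
  rcases inc_elim hpq hfx with rfl | rfl
  · exact ⟨q, hpq⟩
  · exact ⟨p, hpq.trans Sym2.eq_swap⟩

lemma not_loop_ne {f : E} {x y : V} (hnl : ¬ G.IsLoopEdge f) (h : G.ends f = s(x, y)) :
    x ≠ y := by
  intro hc
  exact hnl (by rw [IsLoopEdge, h, hc]; exact Sym2.mk_isDiag_iff.2 rfl)

theorem exists_cycle_of_even {A : Finset E} (hA : A.Nonempty)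
    (h : ∀ z, Even (G.deg A z)) : ∃ C ⊆ A, G.IsCycle C := by
  by_cases hloop : ∃ e ∈ A, G.IsLoopEdge e
  · obtain ⟨e, he, hl⟩ := hloop
    exact ⟨{e}, Finset.singleton_subset_iff.2 he, isCycle_singleton_loop hl⟩
  push_neg at hloop
  set P : ℕ → Prop := fun k => ∃ vs es, G.Walk A vs es ∧ vs.Nodup ∧ es.length = k with hPdef
  have hP1 : P 1 := by
    obtain ⟨e, he⟩ := hA
    obtain ⟨x, y, hex⟩ := exists_ends (G := G) (e := e)
    have hxy : x ≠ y := not_loop_ne (hloop e he) hex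
    exact ⟨[x, y], [e], Walk.cons e he hex (Walk.nil y), by simp [hxy], rfl⟩
  have hPbound : ∀ k, P k → k ≤ A.card := by
    rintro k ⟨vs, es, hw, hnd, hlen⟩
    have h1 : es.Nodup := hw.edges_nodup hnd
    have h2 : es.toFinset ⊆ A := fun e he' => hw.edges_subset e (List.mem_toFinset.1 he')
    calc k = es.length := hlen.symm
      _ = es.toFinset.card := (List.toFinset_card_of_nodup h1).symm
      _ ≤ A.card := Finset.card_le_card h2
  have hcard : 1 ≤ A.card := Finset.card_pos.2 hA
  set k := Nat.findGreatest P A.card with hkdef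
  have hPk : P k := Nat.findGreatest_spec hcard hP1
  have hk1 : 1 ≤ k := Nat.le_findGreatest hcard hP1
  have hnotsucc : ¬ P (k + 1) := by
    intro hsucc
    exact Nat.findGreatest_is_greatest (by omega) (hPbound _ hsucc) hsucc
  obtain ⟨vs, es, hw, hnd, hlen⟩ := hPk
  cases hw with
  | nil v => rw [List.length_nil] at hlen; omega
  | cons e₁ he₁ hends₁ hw' =>
    rename_i x y tl es₁
    have hxvs : x ∉ y :: tl := (List.nodup_cons.1 hnd).1
    have hxy : x ≠ y := fun hc => hxvs (hc ▸ List.mem_cons_self)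
    have hm1 : G.mult e₁ x = 1 := by
      rw [mult_of_ends hends₁ hxy, if_pos rfl]
    have hdx : 2 ≤ G.deg A x := by
      have h1 : G.mult e₁ x ≤ G.deg A x :=
        Finset.single_le_sum (f := fun e => G.mult e x) (fun _ _ => Nat.zero_le _) he₁
      obtain ⟨m, hm⟩ := h x
      omega
    have hexf : ∃ f ∈ A, f ≠ e₁ ∧ G.Inc f x := by
      by_contra hc
      push_neg at hc
      have : G.deg A x = G.mult e₁ x :=
        Finset.sum_eq_single_of_mem e₁ he₁ fun f hf hne => mult_eq_zero (hc f hf hne)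
      omega
    obtain ⟨f, hfA, hfne, hfx⟩ := hexf
    obtain ⟨x2, hf2⟩ := inc_exists_pair hfx
    have hxx2 : x ≠ x2 := not_loop_ne (hloop f hfA) hf2
    by_cases hx2 : x2 ∈ x :: y :: tl
    · -- build a cycle using f and the portion of the walk from x to x2
      obtain ⟨vs', es', hp, hep, hw2, hh, hl⟩ := (Walk.cons e₁ he₁ hends₁ hw').prefix_to hx2
      simp only [List.head?_cons] at hh
      obtain ⟨vs'', rfl⟩ : ∃ t, vs' = x :: t := by
        cases vs' with
        | nil => simp at hh
        | cons a t =>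
          simp only [List.head?_cons, Option.some_inj] at hh
          exact ⟨t, by rw [hh]⟩
      have hnd' : (x :: vs'').Nodup := hp.sublist.nodup hnd
      have hesne : es' ≠ [] := by
        intro hc
        subst hc
        obtain rfl : vs'' = [] := by cases hw2; rfl
        simp only [List.getLast?_singleton, Option.some_inj] at hl
        exact hxx2 hl
      -- f is not among the walk edges
      have hfes : f ∉ e₁ :: es₁ := by
        intro hmem
        rcases List.mem_cons.1 hmem with rfl | hmem'
        · exact hfne rfl
        · exact hxvs (hw'.vertex_mem f hmem' x hfx)
      have hfes' : f ∉ es' := fun hc => hfes (hep.sublist.mem hc)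
      refine ⟨insert f es'.toFinset, ?_, ?_, ?_, ?_⟩
      · intro a ha
        rcases Finset.mem_insert.1 ha with rfl | ha'
        · exact hfA
        · exact hw2.edges_subset a (List.mem_toFinset.1 ha')
      · exact Finset.insert_nonempty _ _
      · -- connectivity
        obtain ⟨g₁, es₂, rfl⟩ : ∃ g₁ es₂, es' = g₁ :: es₂ :=
          ⟨es'.head (by assumption), es'.tail, (List.cons_head_tail _).symm⟩
        have hg₁x : G.Inc g₁ x := walk_cons_inc hw2
        have hCsub : (g₁ :: es₂).toFinset ⊆ insert f (g₁ :: es₂).toFinset :=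
          Finset.subset_insert _ _
        have hadj : G.AdjIn (insert f (g₁ :: es₂).toFinset) f g₁ :=
          ⟨Finset.mem_insert_self _ _, Finset.mem_insert_of_mem (by simp), x, hfx, hg₁x⟩
        have hkey : ∀ g ∈ (g₁ :: es₂).toFinset,
            Relation.ReflTransGen (G.AdjIn (insert f (g₁ :: es₂).toFinset)) f g := by
          intro g hg
          exact Relation.ReflTransGen.head hadj
            (reflTransGen_adjIn_mono hCsub
              (hw2.conn g₁ (List.mem_cons_self) g (List.mem_toFinset.1 hg)))
        intro a ha b hb
        rcases Finset.mem_insert.1 ha with rfl | ha' <;>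
          rcases Finset.mem_insert.1 hb with rfl | hb'
        · exact Relation.ReflTransGen.refl
        · exact hkey b hb'
        · exact reflTransGen_adjIn_symm (hkey a ha')
        · exact (reflTransGen_adjIn_mono hCsub
            ((hw2.conn) a (List.mem_toFinset.1 ha') b (List.mem_toFinset.1 hb')))
      · -- degrees
        intro z
        have hdeg : G.deg (insert f es'.toFinset) z = G.mult f z + G.deg es'.toFinset z :=
          deg_insert (by simpa using hfes') z
        have hwd := hw2.deg_toFinset hnd' hesne z
        have hmf : G.mult f z = if z = x then 1 else if z = x2 then 1 else 0 :=
          mult_of_ends hf2 hxx2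
        -- structure of vs'' : nonempty
        obtain ⟨c, rest, rfl⟩ : ∃ c rest, vs'' = c :: rest := by
          cases hw2 with
          | nil => exact absurd rfl hesne
          | cons e he hends hwx => exact ⟨_, _, rfl⟩
        have hlast : (x :: c :: rest).getLast? = some ((c :: rest).getLast (by simp)) := by
          rw [List.getLast?_cons_cons]
          exact List.getLast?_eq_getLast_of_ne_nil _
        rw [hlast, Option.some_inj] at hl
        have hint : (x :: c :: rest).dropLast.drop 1 = (c :: rest).dropLast := by
          simp [List.dropLast_cons₂]
        have hIsub : ∀ a, a ∈ (c :: rest).dropLast → a ∈ c :: rest := fun a ha =>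
          (List.dropLast_sublist _).mem ha
        have hxcr : x ∉ c :: rest := (List.nodup_cons.1 hnd').1
        have hxint : x ∉ (c :: rest).dropLast := fun hc => hxcr (hIsub _ hc)
        have hx2int : x2 ∉ (c :: rest).dropLast := by
          rw [← hl]
          exact List.getLast_not_mem_dropLast (List.nodup_cons.1 hnd').2 (by simp)
        rw [hl] at hlast
        rw [hdeg, hwd, hmf, hlast, hint]
        simp only [List.head?_cons, Option.some_inj]
        by_cases hzx : z = x
        · right
          rw [if_pos hzx, if_pos hzx.symm, if_neg (fun hc : x2 = z => hxx2 (hc.trans hzx).symm),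
            if_neg (fun hc => hxint (hzx ▸ hc))]
        · by_cases hzx2 : z = x2
          · right
            rw [if_neg hzx, if_pos hzx2, if_neg (fun hc : x = z => hzx hc.symm),
              if_pos hzx2.symm, if_neg (fun hc => hx2int (hzx2 ▸ hc))]
          · by_cases hzi : z ∈ (c :: rest).dropLast
            · right
              rw [if_neg hzx, if_neg hzx2, if_neg (fun hc : x = z => hzx hc.symm),
                if_neg (fun hc : x2 = z => hzx2 hc.symm), if_pos hzi]
            · left
              rw [if_neg hzx, if_neg hzx2, if_neg (fun hc : x = z => hzx hc.symm),
                if_neg (fun hc : x2 = z => hzx2 hc.symm), if_neg hzi]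
    · -- extend the walk, contradicting maximality
      exfalso
      apply hnotsucc
      refine ⟨x2 :: x :: y :: tl, f :: e₁ :: es₁, ?_, ?_, ?_⟩
      · exact Walk.cons f hfA (hf2.trans Sym2.eq_swap ▸ rfl) (Walk.cons e₁ he₁ hends₁ hw')
      · exact List.nodup_cons.2 ⟨hx2, hnd⟩
      · rw [List.length_cons, hlen]

end Multigraph

namespace Multigraph

set_option linter.unusedSectionVars false

variable {V E : Type*} [DecidableEq E] {G : Multigraph V E}

theorem exists_fundCycle {T : Finset E} (hT : G.IsSpanningTree T) {e : E} (he : e ∉ T) :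
    ∃ C, G.IsFundCycle T e C := by
  by_cases hl : G.IsLoopEdge e
  · refine ⟨{e}, isCycle_singleton_loop hl, Finset.mem_singleton_self e, ?_⟩
    intro a ha
    rw [Finset.mem_singleton] at ha
    subst ha
    simp only [Finset.mem_insert]
    tauto
  · obtain ⟨a, b, hab⟩ := exists_ends (G := G) (e := e)
    have hne : a ≠ b := not_loop_ne hl hab
    obtain ⟨vs, es, hw, hh, hlt⟩ := reach_to_walk (hT.1 a b)
    set S := listSymmDiff (es.map ({·})) with hS
    have hST : S ⊆ T := by
      intro g hg
      exact hw.edges_subset g (List.mem_toFinset.1 (listSymmDiff_map_singleton_subset es hg))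
    have heS : e ∉ S := fun hc => he (hST hc)
    have hpar := walk_parity hw hh hlt
    have hC0even : ∀ z, Even (G.deg (insert e S) z) := by
      intro z
      apply even_of_dZ_eq_zero
      have h1 : G.dZ (insert e S) z = (G.mult e z : ZMod 2) + G.dZ S z := by
        unfold dZ
        rw [deg_insert heS]
        push_cast
        ring
      rw [h1, hpar z, mult_parity hab z]
      split_ifs <;> decide
    obtain ⟨C, hCsub, hCcyc⟩ :=
      exists_cycle_of_even ⟨e, Finset.mem_insert_self _ _⟩ hC0even
    have heC : e ∈ C := by
      by_contra hc
      refine hT.2 C ?_ hCcyc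
      intro g hg
      rcases Finset.mem_insert.1 (hCsub hg) with rfl | hgS
      · exact absurd hg hc
      · exact hST hgS
    refine ⟨C, hCcyc, heC, ?_⟩
    intro g hg
    rcases Finset.mem_insert.1 (hCsub hg) with rfl | hgS
    · simp only [Finset.mem_insert]
      tauto
    · simp only [Finset.mem_insert]
      have := hST hgS
      tauto

theorem isCycle_union_paths {P₁ P₂ : Finset E} {u w : V}
    (h₁ : G.IsPath P₁ u w) (h₂ : G.IsPath P₂ u w) (hd : Disjoint P₁ P₂)
    (hsupp : G.Supp P₁ ∩ G.Supp P₂ ⊆ {u, w}) : G.IsCycle (P₁ ∪ P₂) := by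
  obtain ⟨huw, hc₁, hdu₁, hdw₁, hint₁⟩ := h₁
  obtain ⟨-, hc₂, hdu₂, hdw₂, hint₂⟩ := h₂
  have hdeg : ∀ z, G.deg (P₁ ∪ P₂) z = G.deg P₁ z + G.deg P₂ z := deg_union hd
  obtain ⟨e₁, he₁, hi₁⟩ := exists_inc_of_deg_pos (A := P₁) (z := u) (by rw [hdu₁]; norm_num)
  obtain ⟨e₂, he₂, hi₂⟩ := exists_inc_of_deg_pos (A := P₂) (z := u) (by rw [hdu₂]; norm_num)
  refine ⟨⟨e₁, Finset.mem_union_left _ he₁⟩, ?_, ?_⟩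
  · have hadj : G.AdjIn (P₁ ∪ P₂) e₁ e₂ :=
      ⟨Finset.mem_union_left _ he₁, Finset.mem_union_right _ he₂, u, hi₁, hi₂⟩
    intro x hx y hy
    rcases Finset.mem_union.1 hx with hx' | hx' <;> rcases Finset.mem_union.1 hy with hy' | hy'
    · exact reflTransGen_adjIn_mono Finset.subset_union_left (hc₁ x hx' y hy')
    · exact (reflTransGen_adjIn_mono Finset.subset_union_left (hc₁ x hx' e₁ he₁)).trans
        (Relation.ReflTransGen.head hadj
          (reflTransGen_adjIn_mono Finset.subset_union_right (hc₂ e₂ he₂ y hy')))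
    · exact (reflTransGen_adjIn_mono Finset.subset_union_right (hc₂ x hx' e₂ he₂)).trans
        (Relation.ReflTransGen.head (adjIn_symm hadj)
          (reflTransGen_adjIn_mono Finset.subset_union_left (hc₁ e₁ he₁ y hy')))
    · exact reflTransGen_adjIn_mono Finset.subset_union_right (hc₂ x hx' y hy')
  · intro z
    rw [hdeg]
    by_cases hzu : z = u
    · subst hzu
      rw [hdu₁, hdu₂]
      right
      rfl
    by_cases hzw : z = w
    · subst hzw
      rw [hdw₁, hdw₂]
      right
      rfl
    rcases hint₁ z hzu hzw with h1 | h1 <;> rcases hint₂ z hzu hzw with h2 | h2 <;>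
      rw [h1, h2]
    · left; rfl
    · right; rfl
    · right; rfl
    · exfalso
      obtain ⟨f₁, hf₁, hif₁⟩ := exists_inc_of_deg_pos (A := P₁) (z := z) (by rw [h1]; norm_num)
      obtain ⟨f₂, hf₂, hif₂⟩ := exists_inc_of_deg_pos (A := P₂) (z := z) (by rw [h2]; norm_num)
      have : z ∈ ({u, w} : Set V) := hsupp ⟨⟨f₁, hf₁, hif₁⟩, ⟨f₂, hf₂, hif₂⟩⟩
      rcases this with h | h
      · exact hzu h
      · exact hzw h

end Multigraph

lemma countP_eq_one_of_nodup {α : Type*} {l : List α} (hnd : l.Nodup) {g : α} (hg : g ∈ l)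
    (p : α → Bool) (hp : ∀ a ∈ l, (p a = true ↔ a = g)) : l.countP p = 1 := by
  induction l with
  | nil => simp at hg
  | cons a t ih =>
    rw [List.countP_cons]
    by_cases hag : a = g
    · subst hag
      have hat : a ∉ t := (List.nodup_cons.1 hnd).1
      have h0 : t.countP p = 0 := by
        rw [List.countP_eq_zero]
        intro b hb hpb
        have := (hp b (List.mem_cons_of_mem _ hb)).1 hpb
        exact hat (this ▸ hb)
      rw [h0, if_pos ((hp a (List.mem_cons_self)).2 rfl)]
    · have hgt : g ∈ t := by
        rcases List.mem_cons.1 hg with rfl | h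
        · exact absurd rfl hag
        · exact h
      have h1 : t.countP p = 1 :=
        ih (List.nodup_cons.1 hnd).2 hgt fun b hb => hp b (List.mem_cons_of_mem _ hb)
      rw [h1, if_neg (fun hc => hag ((hp a (List.mem_cons_self)).1 hc))]


/-- Let `(G, 𝒞)` be a linear biased graph, `T` a spanning tree, and `P₁, P₂` two
internally vertex-disjoint `(u,w)`-paths with `E(P₁) ⊆ E(T)` and `E(P₂) ∩ E(T) = ∅`.
If for each `e ∈ E(P₂)` the fundamental cycle `C(e,T)` is balanced, then the cycle
`P₁ ∪ P₂` is balanced. -/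
theorem balanced_of_fund_balanced {V E : Type*} [DecidableEq E]
    (Ω : LinearBiasedGraph V E) (T P₁ P₂ : Finset E) (u w : V)
    (hT : Ω.G.IsSpanningTree T)
    (hP₁ : Ω.G.IsPath P₁ u w) (hP₂ : Ω.G.IsPath P₂ u w)
    (hP₁T : P₁ ⊆ T) (hP₂T : ∀ e ∈ P₂, e ∉ T)
    (hdisj : Ω.G.Supp P₁ ∩ Ω.G.Supp P₂ ⊆ {u, w})
    (hfund : ∀ e ∈ P₂, ∀ C : Finset E, Ω.G.IsFundCycle T e C → C ∈ Ω.Bal) :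
    P₁ ∪ P₂ ∈ Ω.Bal := by
  have hdisjP : Disjoint P₁ P₂ :=
    Finset.disjoint_left.2 fun a h1 h2 => hP₂T a h2 (hP₁T h1)
  have hcyc : Ω.G.IsCycle (P₁ ∪ P₂) :=
    Multigraph.isCycle_union_paths hP₁ hP₂ hdisjP hdisj
  have hexists : ∀ e ∈ P₂, ∃ C, Ω.G.IsFundCycle T e C := fun e he =>
    Multigraph.exists_fundCycle hT (hP₂T e he)
  choose! fC hfC using hexists
  set L := P₂.toList.map fC with hL
  have hbal : ∀ D ∈ L, D ∈ Ω.Bal := by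
    intro D hD
    obtain ⟨g, hg, rfl⟩ := List.mem_map.1 hD
    have hg' : g ∈ P₂ := Finset.mem_toList.1 hg
    exact hfund g hg' _ (hfC g hg')
  have hmm : ∀ p ∈ P₂, ∀ g ∈ P₂, (g ∈ fC p ↔ p = g) := by
    intro p hp g hg
    constructor
    · intro hgC
      have h1 := (hfC p hp).2.2 hgC
      simp only [Finset.mem_insert] at h1
      rcases h1 with rfl | h1
      · rfl
      · exact absurd h1 (hP₂T g hg)
    · rintro rfl
      exact (hfC p hp).2.1
  have hmemS : ∀ g ∈ P₂, g ∈ listSymmDiff L := by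
    intro g hg
    rw [mem_listSymmDiff]
    have hcnt : L.countP (fun C => decide (g ∈ C)) = 1 := by
      rw [hL, List.countP_map]
      refine countP_eq_one_of_nodup P₂.nodup_toList (Finset.mem_toList.2 hg) _ ?_
      intro p hp
      simp only [Function.comp, decide_eq_true_eq]
      exact hmm p (Finset.mem_toList.1 hp) g hg
    rw [hcnt]
    exact odd_one
  have hSsub : ∀ g ∈ listSymmDiff L, g ∈ P₂ ∨ g ∈ T := by
    intro g hgS
    rw [mem_listSymmDiff] at hgS
    have hpos := hgS.pos
    rw [List.countP_pos_iff] at hpos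
    obtain ⟨D, hD, hgD⟩ := hpos
    obtain ⟨p, hp, rfl⟩ := List.mem_map.1 hD
    have hp' : p ∈ P₂ := Finset.mem_toList.1 hp
    rw [decide_eq_true_eq] at hgD
    have h1 := (hfC p hp').2.2 hgD
    simp only [Finset.mem_insert] at h1
    rcases h1 with rfl | h1
    · exact Or.inl hp'
    · exact Or.inr h1
  have hSdZ : ∀ z, Ω.G.dZ (listSymmDiff L) z = 0 := by
    intro z
    rw [Multigraph.dZ_listSymmDiff]
    apply List.sum_eq_zero
    intro x hx
    obtain ⟨D, hD, rfl⟩ := List.mem_map.1 hx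
    obtain ⟨p, hp, rfl⟩ := List.mem_map.1 hD
    exact Multigraph.dZ_of_cycle (hfC p (Finset.mem_toList.1 hp)).1 z
  have hXeven : ∀ z, Even (Ω.G.deg ((P₁ ∪ P₂) ∆ listSymmDiff L) z) := by
    intro z
    apply Multigraph.even_of_dZ_eq_zero
    rw [Multigraph.dZ_symmDiff, Multigraph.dZ_of_cycle hcyc, hSdZ, add_zero]
  have hXempty : (P₁ ∪ P₂) ∆ listSymmDiff L = ∅ := by
    by_contra hne
    obtain ⟨C, hCX, hCc⟩ :=
      Multigraph.exists_cycle_of_even (Finset.nonempty_iff_ne_empty.2 hne) hXeven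
    refine hT.2 C ?_ hCc
    intro g hgC
    have hgX := hCX hgC
    rw [Finset.mem_symmDiff] at hgX
    rcases hgX with ⟨hg1, hg2⟩ | ⟨hg1, hg2⟩
    · rcases Finset.mem_union.1 hg1 with hg | hg
      · exact hP₁T hg
      · exact absurd (hmemS g hg) hg2
    · rcases hSsub g hg1 with hg | hg
      · exact absurd (Finset.mem_union_right _ hg) hg2
      · exact hg
  have heq : P₁ ∪ P₂ = listSymmDiff L := by
    rw [← Finset.bot_eq_empty] at hXempty
    exact symmDiff_eq_bot.1 hXempty
  exact Ω.linear L hbal _ hcyc heq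
end

section
/- Let M be a matroid, B a base, e ∈ B, e′ ∉ B with B′ = B − e + e′ a base. Let H be a subset of the ground set with B ∩ H = {h}, and define F(B) = { f ∈ H : (B \ H) ∪ {f} is a base } and similarly F(B′). Suppose F(B′) ≠ ∅ and F(B) \ F(B′) ≠ ∅. Then B − h + e′ is a base of M. -/
open Set

/-- Let `M` be a matroid, `B` a base, `e ∈ B`, `e' ∉ B` with `B' = B - e + e'` a base.
Let `H` be a subset of the ground set with `B ∩ H = {h}` and, for a base `X`, let
`F X = { f ∈ H : (X \ H) ∪ {f} is a base }`.  If `F B' ≠ ∅` and `F B \ F B' ≠ ∅`, then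
`B - h + e'` is a base of `M`. -/
theorem base_exchange_through_H {α : Type*} (M : Matroid α) (B : Set α) (hB : M.IsBase B)
    (e : α) (he : e ∈ B) (e' : α) (he' : e' ∉ B)
    (hB' : M.IsBase (insert e' (B \ {e})))
    (H : Set α) (h : α) (hBH : B ∩ H = {h})
    (hne : {f ∈ H | M.IsBase ((insert e' (B \ {e}) \ H) ∪ {f})}.Nonempty)
    (hdiff : ({f ∈ H | M.IsBase ((B \ H) ∪ {f})} \
        {f ∈ H | M.IsBase ((insert e' (B \ {e}) \ H) ∪ {f})}).Nonempty) :
    M.IsBase (insert e' (B \ {h})) := by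
  have hhBH : h ∈ B ∩ H := by rw [hBH]; exact rfl
  have hhB : h ∈ B := hhBH.1
  have hhH : h ∈ H := hhBH.2
  have hmemH : ∀ x ∈ B, x ∈ H → x = h := fun x hxB hxH => by
    have : x ∈ B ∩ H := ⟨hxB, hxH⟩
    rwa [hBH, mem_singleton_iff] at this
  have hBdH : B \ H = B \ {h} := by
    ext x
    simp only [mem_diff, mem_singleton_iff]
    exact ⟨fun ⟨hx, hxH⟩ => ⟨hx, fun hxh => hxH (hxh ▸ hhH)⟩,
      fun ⟨hx, hxh⟩ => ⟨hx, fun hxH => hxh (hmemH x hx hxH)⟩⟩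
  by_cases heh : e = h
  · subst heh; exact hB'
  have heH : e ∉ H := fun hc => heh (hmemH e he hc)
  have he'h : e' ≠ h := fun hc => he' (hc ▸ hhB)
  by_cases he'H : e' ∈ H
  · -- then F(B') = ∅, contradicting hne
    exfalso
    obtain ⟨f, hfH, hfbase⟩ := hne
    have hset : insert e' (B \ {e}) \ H = (B \ {h}) \ {e} := by
      rw [insert_diff_of_mem _ he'H, diff_diff_comm, hBdH]
    rw [hset] at hfbase
    by_cases hfh : f = h
    · rw [hfh] at hfbase
      have hDB : (B \ {h}) \ {e} ∪ {h} = B \ {e} := by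
        ext x
        simp only [mem_union, mem_diff, mem_singleton_iff]
        constructor
        · rintro (⟨⟨hx, _⟩, hxe⟩ | rfl)
          · exact ⟨hx, hxe⟩
          · exact ⟨hhB, Ne.symm heh⟩
        · rintro ⟨hx, hxe⟩
          by_cases hxh : x = h
          · exact Or.inr hxh
          · exact Or.inl ⟨⟨hx, hxh⟩, hxe⟩
      rw [hDB] at hfbase
      have := hfbase.eq_of_subset_isBase hB diff_subset
      rw [← this] at he
      exact he.2 rfl
    · have hfB : f ∉ B := fun hc => hfh (hmemH f hc hfH)
      have hD : ((B \ {h}) \ {e} ∪ {f}) \ B = {f} := by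
        ext x
        simp only [mem_diff, mem_union, mem_singleton_iff]
        constructor
        · rintro ⟨(⟨⟨hx, _⟩, _⟩ | rfl), hxB⟩
          · exact absurd hx hxB
          · rfl
        · rintro rfl; exact ⟨Or.inr rfl, hfB⟩
      have hBD : B \ ((B \ {h}) \ {e} ∪ {f}) = {h, e} := by
        ext x
        simp only [mem_diff, mem_union, mem_singleton_iff, mem_insert_iff]
        constructor
        · rintro ⟨hx, hxD⟩
          by_cases hxh : x = h
          · exact Or.inl hxh
          by_cases hxe : x = e
          · exact Or.inr hxe
          · exact absurd (Or.inl ⟨⟨hx, hxh⟩, hxe⟩) hxD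
        · rintro (rfl | rfl)
          · exact ⟨hhB, fun hc => hc.elim (fun h1 => h1.1.2 rfl) (fun h1 => hfh h1.symm)⟩
          · refine ⟨he, fun hc => hc.elim (fun h1 => h1.2 rfl) (fun h1 => ?_)⟩
            exact hfB (h1 ▸ he)
      have hcard := hfbase.encard_sdiff_comm hB
      rw [hD, hBD, encard_singleton, encard_pair (Ne.symm (fun hc : e = h => heh hc))] at hcard
      exact (by norm_num : (1 : ℕ∞) ≠ 2) hcard
  -- main case : e ≠ h, e' ∉ H
  set A : Set α := (B \ {h}) \ {e} with hA
  have heA : e ∉ A := fun hc => hc.2 rfl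
  have hhA : h ∉ A := fun hc => hc.1.2 rfl
  have hAB : A ⊆ B := (diff_subset.trans diff_subset)
  have he'A : e' ∉ A := fun hc => he' (hAB hc)
  have hBh : B \ {h} = insert e A := by
    ext x
    simp only [mem_insert_iff, mem_diff, mem_singleton_iff, hA]
    constructor
    · rintro ⟨hx, hxh⟩
      by_cases hxe : x = e
      · exact Or.inl hxe
      · exact Or.inr ⟨⟨hx, hxh⟩, hxe⟩
    · rintro (rfl | ⟨⟨hx, hxh⟩, _⟩)
      · exact ⟨he, heh⟩
      · exact ⟨hx, hxh⟩
  have hBe : B \ {e} = insert h A := by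
    ext x
    simp only [mem_insert_iff, mem_diff, mem_singleton_iff, hA]
    constructor
    · rintro ⟨hx, hxe⟩
      by_cases hxh : x = h
      · exact Or.inl hxh
      · exact Or.inr ⟨⟨hx, hxh⟩, hxe⟩
    · rintro (rfl | ⟨⟨hx, hxh⟩, hxe⟩)
      · exact ⟨hhB, Ne.symm heh⟩
      · exact ⟨hx, hxe⟩
  have hB'H : insert e' (B \ {e}) \ H = insert e' A := by
    rw [insert_diff_of_notMem _ he'H, diff_diff_comm, hBdH]
  obtain ⟨f, hfmem, hfnmem⟩ := hdiff
  simp only [mem_setOf_eq, mem_sep_iff] at hfmem hfnmem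
  obtain ⟨hfH, hfbase⟩ := hfmem
  have hfnB' : ¬ M.IsBase (insert e' A ∪ {f}) := fun hc => hfnmem ⟨hfH, by rwa [hB'H]⟩
  -- f ≠ h since h ∈ F(B')
  have hfh : f ≠ h := by
    rintro rfl
    apply hfnB'
    have : insert e' A ∪ {f} = insert e' (B \ {e}) := by
      rw [hBe, union_singleton, insert_comm]
    rwa [this]
  have hfB : f ∉ B := fun hc => hfh (hmemH f hc hfH)
  have hfe : f ≠ e := fun hc => heH (hc ▸ hfH)
  have hfe' : f ≠ e' := fun hc => he'H (hc ▸ hfH)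
  have hfA : f ∉ A := fun hc => hfB (hAB hc)
  rw [hBdH, hBh, union_singleton] at hfbase
  -- hfbase : M.IsBase (insert f (insert e A))
  rw [union_singleton, insert_comm] at hfnB'
  -- hfnB' : ¬ M.IsBase (insert e' (insert f A))
  have hB'eq : insert e' (B \ {e}) = insert e' (insert h A) := by rw [hBe]
  have hiB' : M.Indep (insert e' (insert h A)) := hB'eq ▸ hB'.indep
  have he'E : e' ∈ M.E := hB'.subset_ground (mem_insert _ _)
  have he'hA : e' ∉ insert h A := by
    simp only [mem_insert_iff]
    rintro (rfl | hc)
    · exact he'h rfl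
    · exact he'A hc
  have hIhA : M.Indep (insert h A) := hiB'.subset (subset_insert _ _)
  have hcl1 : e' ∉ M.closure (insert h A) :=
    (((hIhA.insert_indep_iff_of_notMem he'hA).mp hiB').2)
  have hclA : e' ∉ M.closure A :=
    fun hc => hcl1 (M.closure_subset_closure (subset_insert _ _) hc)
  -- e' ∈ closure (insert f A)
  have hIfA : M.Indep (insert f A) := hfbase.indep.subset (by
    intro x hx
    rcases hx with rfl | hx
    · exact mem_insert _ _
    · exact mem_insert_of_mem _ (mem_insert_of_mem _ hx))
  have he'fA : e' ∉ insert f A := by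
    simp only [mem_insert_iff]
    rintro (rfl | hc)
    · exact hfe' rfl
    · exact he'A hc
  have hXdiff : insert f (insert e A) \ {e} = insert f A := by
    ext x
    simp only [mem_diff, mem_insert_iff, mem_singleton_iff]
    constructor
    · rintro ⟨(rfl | rfl | hx), hxe⟩
      · exact Or.inl rfl
      · exact absurd rfl hxe
      · exact Or.inr hx
    · rintro (rfl | hx)
      · exact ⟨Or.inl rfl, hfe⟩
      · exact ⟨Or.inr (Or.inr hx), fun hc => heA (hc ▸ hx)⟩
  have he'X : e' ∉ insert f (insert e A) := by
    simp only [mem_insert_iff]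
    rintro (rfl | rfl | hc)
    · exact hfe' rfl
    · exact he' he
    · exact he'A hc
  have hnind : ¬ M.Indep (insert e' (insert f A)) := by
    intro hind
    apply hfnB'
    have := hfbase.exchange_isBase_of_indep (e := e) he'X (by rwa [hXdiff])
    rwa [hXdiff] at this
  have he'clfA : e' ∈ M.closure (insert f A) := by
    by_contra hc
    exact hnind ((hIfA.insert_indep_iff_of_notMem he'fA).mpr ⟨he'E, hc⟩)
  have hfcl : f ∈ M.closure (insert e' A) :=
    (Matroid.closure_exchange ⟨he'clfA, hclA⟩).1
  -- now by contradiction on the goal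
  have hgoal : M.Indep (insert e' (B \ {h})) := by
    rw [hBh]
    by_contra hnind2
    have hIeA : M.Indep (insert e A) := hfbase.indep.subset (subset_insert _ _)
    have he'eA : e' ∉ insert e A := by
      simp only [mem_insert_iff]
      rintro (rfl | hc)
      · exact he' he
      · exact he'A hc
    have he'cleA : e' ∈ M.closure (insert e A) := by
      by_contra hc
      exact hnind2 ((hIeA.insert_indep_iff_of_notMem he'eA).mpr ⟨he'E, hc⟩)
    have hecl : e ∈ M.closure (insert e' A) :=
      (Matroid.closure_exchange ⟨he'cleA, hclA⟩).1
    -- insert e' A is spanning and independent, hence a base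
    have hIe'A : M.Indep (insert e' A) := hiB'.subset (by
      intro x hx
      rcases hx with rfl | hx
      · exact mem_insert _ _
      · exact mem_insert_of_mem _ (mem_insert_of_mem _ hx))
    have hsub : insert f (insert e A) ⊆ M.closure (insert e' A) := by
      intro x hx
      rcases hx with rfl | rfl | hx
      · exact hfcl
      · exact hecl
      · exact M.mem_closure_of_mem (mem_insert_of_mem _ hx) hIe'A.subset_ground
    have hspan : M.E ⊆ M.closure (insert e' A) := by
      have := M.closure_subset_closure_of_subset_closure hsub
      rw [hfbase.closure_eq] at this
      exact this
    have hbase : M.IsBase (insert e' A) := hIe'A.isBase_of_ground_subset_closure hspan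
    -- contradiction with g ∈ F(B')
    obtain ⟨g, hgH, hgbase⟩ := hne
    rw [hB'H, union_singleton] at hgbase
    have hge' : g ≠ e' := fun hc => he'H (hc ▸ hgH)
    have hgA : g ∉ A := fun hc => hhA ((hmemH g (hAB hc) hgH) ▸ hc)
    have hgmem : g ∉ insert e' A := by
      simp only [mem_insert_iff]
      rintro (rfl | hc)
      · exact hge' rfl
      · exact hgA hc
    have := hbase.eq_of_subset_isBase hgbase (subset_insert _ _)
    exact hgmem (this ▸ mem_insert g (insert e' A))
  exact hB.exchange_isBase_of_indep he' hgoal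
end
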